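/- arXiv:1011.0284 — 3 statements merged into one kernel-verified Lean document; each statement's English description precedes it below -/
import Mathlib

section
/- For all integers r ≥ 1 and s with r ≤ s ≤ 2r, the matching polynomial of the graph S(r,s) is μ(S(r,s),x) = x (x² − s − 1)(x² − 1)^{r−1}. -/
open Polynomial

/-- The graph obtained from `G` by deleting the vertex `u` and all incident edges. -/
def SimpleGraph.deleteVertex {V : Type*} (G : SimpleGraph V) (u : V) :
    SimpleGraph {v : V // v ≠ u} where
  Adj a b := G.Adj a b
  symm := ⟨fun _ _ h => G.adj_symm h⟩
  loopless := ⟨fun a h => G.loopless.irrefl a h⟩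

/-- `s` is a matching in `G`: a set of edges of `G` that are pairwise non-incident. -/
def SimpleGraph.IsMatchingFinset {V : Type*} (G : SimpleGraph V) (s : Finset (Sym2 V)) : Prop :=
  ↑s ⊆ G.edgeSet ∧ (s : Set (Sym2 V)).Pairwise fun e f => ∀ v ∈ e, v ∉ f

/-- `m(G,k)`: the number of `k`-matchings in `G`. -/
noncomputable def SimpleGraph.numMatchings {V : Type*} (G : SimpleGraph V) (k : ℕ) : ℕ :=
  {s : Finset (Sym2 V) | s.card = k ∧ G.IsMatchingFinset s}.ncard

/-- The matching polynomial `μ(G,x) = ∑_k (-1)^k m(G,k) x^(n-2k)`. -/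
noncomputable def SimpleGraph.matchingPolynomial {V : Type*} [Fintype V] (G : SimpleGraph V) :
    Polynomial ℝ :=
  ∑ k ∈ Finset.range (Fintype.card V + 1),
    C ((-1 : ℝ) ^ k * (G.numMatchings k : ℝ)) * X ^ (Fintype.card V - 2 * k)

/-- The graph `S(r,s)` (for `r ≤ s ≤ 2r`): `r` disjoint copies of `K₂` together with an extra
vertex `none` joined by `s` edges to them, namely to the endpoint `(i, false)` of every copy and
to both endpoints of the first `s - r` copies. -/
def SGraph (r s : ℕ) : SimpleGraph (Option (Fin r × Bool)) :=
  SimpleGraph.fromRel fun x y =>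
    (∃ i, x = some (i, false) ∧ y = some (i, true)) ∨
    (∃ i, x = none ∧ y = some (i, false)) ∨
    (∃ i : Fin r, (i : ℕ) < s - r ∧ x = none ∧ y = some (i, true))

/-! A matching of `S(r,s)` is a set of copies of `K₂`, possibly together with one of the `s` edges
at `u` and then avoiding the copy that edge meets. Writing `μ` as a signed sum over matchings, the
matchings of the first kind contribute `∑_{B ⊆ [r]} (-1)^|B| x^(2r+1-2|B|) = x (x² - 1)^r`, and
each edge at `u` contributes `-x (x² - 1)^(r-1)`. -/

open Finset

namespace SimpleGraph

variable {V : Type*} {G : SimpleGraph V}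

theorem IsMatchingFinset.card_le [Fintype V] {M : Finset (Sym2 V)} (hM : G.IsMatchingFinset M) :
    #M ≤ Fintype.card V := by
  refine card_le_card_of_injOn (fun e => e.out.1) (fun _ _ => mem_coe.2 (mem_univ _)) ?_
  intro e he f hf hef
  by_contra hne
  exact hM.2 he hf hne _ e.out_fst_mem ((show e.out.1 = f.out.1 from hef) ▸ f.out_fst_mem)

theorem matchingPolynomial_eq_sum [Fintype V] (𝓜 : Finset (Finset (Sym2 V)))
    (h𝓜 : ∀ M, M ∈ 𝓜 ↔ G.IsMatchingFinset M) :
    G.matchingPolynomial = ∑ M ∈ 𝓜, (-1) ^ #M * X ^ (Fintype.card V - 2 * #M) := by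
  have hnum (k : ℕ) : G.numMatchings k = #{M ∈ 𝓜 | #M = k} := by
    rw [numMatchings, ← Set.ncard_coe_finset]
    congr 1
    ext M
    simp [h𝓜, and_comm]
  have hmaps : ∀ M ∈ 𝓜, #M ∈ range (Fintype.card V + 1) := fun M hM =>
    mem_range_succ_iff.2 ((h𝓜 M).1 hM).card_le
  rw [matchingPolynomial, ← sum_fiberwise_of_maps_to hmaps]
  refine sum_congr rfl fun k _ => ?_
  rw [hnum, sum_congr rfl fun M hM => by rw [(mem_filter.1 hM).2], sum_const, nsmul_eq_mul]
  simp only [map_mul, map_pow, map_neg, map_one, map_natCast]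
  ring

end SimpleGraph

theorem sum_powerset_neg_one_pow_mul_pow_card_sdiff {ι R : Type*} [DecidableEq ι] [CommRing R]
    (T : Finset ι) (a : R) : ∑ B ∈ T.powerset, (-1) ^ #B * a ^ #(T \ B) = (a - 1) ^ #T := by
  rw [sub_eq_neg_add, ← prod_const, prod_add]
  simp [prod_const]

theorem sum_powerset_neg_one_pow_mul_X_pow {ι R : Type*} [DecidableEq ι] [CommRing R]
    (T : Finset ι) {n : ℕ} (hT : #T = n) :
    ∑ B ∈ T.powerset, (-1 : R[X]) ^ #B * X ^ (2 * n + 1 - 2 * #B) = X * (X ^ 2 - 1) ^ n := by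
  rw [← hT, ← sum_powerset_neg_one_pow_mul_pow_card_sdiff, mul_sum]
  refine sum_congr rfl fun B hB => ?_
  have hBT : #B ≤ #T := card_le_card (mem_powerset.1 hB)
  rw [card_sdiff_of_subset (mem_powerset.1 hB), ← pow_mul,
    show 2 * #T + 1 - 2 * #B = 2 * (#T - #B) + 1 by omega]
  ring

namespace SGraph

variable {r s : ℕ}

-- The hub is the extra vertex `none`; `hubNbrs r s` is its set of neighbours.
def hubNbrs (r s : ℕ) : Finset (Fin r × Bool) := {p | p.2 = false ∨ (p.1 : ℕ) < s - r}

theorem card_hubNbrs (hrs : r ≤ s) (hs : s ≤ 2 * r) : #(hubNbrs r s) = s := by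
  rw [hubNbrs, card_filter, Fintype.sum_prod_type]
  simp only [Fintype.sum_bool, true_or, if_true, Bool.true_eq_false, false_or]
  rw [sum_add_distrib, ← card_filter, Fin.card_filter_val_lt]
  simp
  omega

def copyEdge (i : Fin r) : Sym2 (Option (Fin r × Bool)) := s(some (i, false), some (i, true))

def hubEdge (p : Fin r × Bool) : Sym2 (Option (Fin r × Bool)) := s(none, some p)

theorem mem_edgeSet_iff {e : Sym2 (Option (Fin r × Bool))} :
    e ∈ (SGraph r s).edgeSet ↔
      (∃ i, e = copyEdge i) ∨ ∃ p ∈ hubNbrs r s, e = hubEdge p := by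
  induction e using Sym2.ind with
  | h x y =>
    rcases x with _ | ⟨i, _ | _⟩ <;> rcases y with _ | ⟨j, _ | _⟩ <;>
      simp [SGraph, copyEdge, hubEdge, hubNbrs, @eq_comm (Fin r)]

theorem mem_copyEdge {v : Option (Fin r × Bool)} {i : Fin r} :
    v ∈ copyEdge i ↔ ∃ b, v = some (i, b) := by
  rcases v with _ | ⟨j, _ | _⟩ <;> simp [copyEdge, @eq_comm (Fin r)]

theorem mem_hubEdge {v : Option (Fin r × Bool)} {p : Fin r × Bool} :
    v ∈ hubEdge p ↔ v = none ∨ v = some p :=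
  Sym2.mem_iff

theorem copyEdge_injective : Function.Injective (copyEdge (r := r)) := by
  intro i j h
  obtain ⟨b, hb⟩ :=
    mem_copyEdge.1 (show some (i, false) ∈ copyEdge j from h ▸ mem_copyEdge.2 ⟨false, rfl⟩)
  simp only [Option.some.injEq, Prod.mk.injEq] at hb
  exact hb.1

theorem hubEdge_injective : Function.Injective (hubEdge (r := r)) := by
  intro p q h
  simpa using mem_hubEdge.1 (show some p ∈ hubEdge q from h ▸ mem_hubEdge.2 (Or.inr rfl))

theorem hubEdge_ne_copyEdge (p : Fin r × Bool) (i : Fin r) : hubEdge p ≠ copyEdge i := by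
  intro h
  simpa using mem_copyEdge.1 (show none ∈ copyEdge i from h ▸ mem_hubEdge.2 (Or.inl rfl))

theorem hubEdge_notMem_image_copyEdge (p : Fin r × Bool) (B : Finset (Fin r)) :
    hubEdge p ∉ B.image copyEdge := by
  simpa using fun i _ h => hubEdge_ne_copyEdge p i h.symm

theorem card_image_copyEdge (B : Finset (Fin r)) : #(B.image copyEdge) = #B :=
  card_image_of_injective B copyEdge_injective

theorem card_insert_hubEdge (p : Fin r × Bool) (B : Finset (Fin r)) :
    #(insert (hubEdge p) (B.image copyEdge)) = #B + 1 := by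
  rw [card_insert_of_notMem (hubEdge_notMem_image_copyEdge p B), card_image_copyEdge]

theorem notMem_copyEdge_of_mem_copyEdge {v : Option (Fin r × Bool)} {i j : Fin r} (hij : i ≠ j)
    (hv : v ∈ copyEdge i) : v ∉ copyEdge j := by
  obtain ⟨b, rfl⟩ := mem_copyEdge.1 hv
  simpa [mem_copyEdge] using hij

theorem notMem_copyEdge_of_mem_hubEdge {v : Option (Fin r × Bool)} {p : Fin r × Bool} {i : Fin r}
    (hpi : p.1 ≠ i) (hv : v ∈ hubEdge p) : v ∉ copyEdge i := by
  rcases mem_hubEdge.1 hv with rfl | rfl <;> simp [mem_copyEdge, Prod.ext_iff, hpi]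

theorem isMatchingFinset_image_copyEdge (B : Finset (Fin r)) :
    (SGraph r s).IsMatchingFinset (B.image copyEdge) := by
  refine ⟨?_, ?_⟩
  · intro e he
    obtain ⟨i, -, rfl⟩ := mem_image.1 he
    exact mem_edgeSet_iff.2 (Or.inl ⟨i, rfl⟩)
  · rw [coe_image, copyEdge_injective.injOn.pairwise_image]
    exact fun i _ j _ hij _ => notMem_copyEdge_of_mem_copyEdge hij

theorem isMatchingFinset_insert_hubEdge {p : Fin r × Bool} {B : Finset (Fin r)}
    (hp : p ∈ hubNbrs r s) (hpB : p.1 ∉ B) :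
    (SGraph r s).IsMatchingFinset (insert (hubEdge p) (B.image copyEdge)) := by
  obtain ⟨hsub, hpair⟩ := isMatchingFinset_image_copyEdge (s := s) B
  refine ⟨?_, ?_⟩
  · rw [coe_insert]
    exact Set.insert_subset (mem_edgeSet_iff.2 (Or.inr ⟨p, hp, rfl⟩)) hsub
  · rw [coe_insert, Set.pairwise_insert]
    refine ⟨hpair, fun e he _ => ?_⟩
    obtain ⟨i, hi, rfl⟩ := mem_image.1 he
    have hpi : p.1 ≠ i := fun h => hpB (h ▸ hi)
    exact ⟨fun _ => notMem_copyEdge_of_mem_hubEdge hpi,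
      fun _ hv hv' => notMem_copyEdge_of_mem_hubEdge hpi hv' hv⟩

theorem hubEdge_mem_edgeSet_iff {p : Fin r × Bool} :
    hubEdge p ∈ (SGraph r s).edgeSet ↔ p ∈ hubNbrs r s := by
  rw [mem_edgeSet_iff]
  constructor
  · rintro (⟨i, h⟩ | ⟨q, hq, h⟩)
    · exact absurd h (hubEdge_ne_copyEdge p i)
    · rwa [hubEdge_injective h]
  · exact fun hp => Or.inr ⟨p, hp, rfl⟩

theorem eq_image_copyEdge_or_of_isMatchingFinset {M : Finset (Sym2 (Option (Fin r × Bool)))}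
    (hM : (SGraph r s).IsMatchingFinset M) :
    (∃ B : Finset (Fin r), M = B.image copyEdge) ∨
      ∃ p ∈ hubNbrs r s, ∃ B : Finset (Fin r),
        p.1 ∉ B ∧ M = insert (hubEdge p) (B.image copyEdge) := by
  set B : Finset (Fin r) := {i | copyEdge i ∈ M}
  have hB : B.image copyEdge ⊆ M := by
    intro e he
    obtain ⟨i, hi, rfl⟩ := mem_image.1 he
    exact (mem_filter.1 hi).2
  have hsplit : ∀ e ∈ M, e ∈ B.image copyEdge ∨ ∃ p, e = hubEdge p := by
    intro e he
    rcases mem_edgeSet_iff.1 (hM.1 he) with ⟨i, rfl⟩ | ⟨p, -, rfl⟩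
    · exact Or.inl (mem_image_of_mem _ (mem_filter.2 ⟨mem_univ _, he⟩))
    · exact Or.inr ⟨p, rfl⟩
  by_cases hhub : ∃ p, hubEdge p ∈ M
  · obtain ⟨p, hpM⟩ := hhub
    refine Or.inr ⟨p, hubEdge_mem_edgeSet_iff.1 (hM.1 hpM), B, fun hpB => ?_, ?_⟩
    · exact hM.2 hpM (hB (mem_image_of_mem _ hpB)) (hubEdge_ne_copyEdge p p.1) (some p)
        (mem_hubEdge.2 (Or.inr rfl)) (mem_copyEdge.2 ⟨p.2, rfl⟩)
    · refine subset_antisymm (fun e he => ?_) (insert_subset hpM hB)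
      rcases hsplit e he with he' | ⟨q, rfl⟩
      · exact mem_insert_of_mem he'
      · by_contra hq
        exact hM.2 hpM he (fun h => hq (h ▸ mem_insert_self _ _)) none
          (mem_hubEdge.2 (Or.inl rfl)) (mem_hubEdge.2 (Or.inl rfl))
  · refine Or.inl ⟨B, subset_antisymm (fun e he => ?_) hB⟩
    rcases hsplit e he with he' | ⟨q, rfl⟩
    · exact he'
    · exact absurd ⟨q, he⟩ hhub

def matchings (r s : ℕ) : Finset (Finset (Sym2 (Option (Fin r × Bool)))) :=
  univ.powerset.image (image copyEdge) ∪
    ((hubNbrs r s).sigma fun p => (univ.erase p.1).powerset).image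
      fun x => insert (hubEdge x.1) (x.2.image copyEdge)

theorem mem_matchings_iff {M : Finset (Sym2 (Option (Fin r × Bool)))} :
    M ∈ matchings r s ↔ (SGraph r s).IsMatchingFinset M := by
  simp only [matchings, mem_union, mem_image, mem_powerset, mem_sigma, subset_univ, true_and,
    subset_erase, Sigma.exists]
  constructor
  · rintro (⟨B, rfl⟩ | ⟨p, B, ⟨hp, hpB⟩, rfl⟩)
    · exact isMatchingFinset_image_copyEdge B
    · exact isMatchingFinset_insert_hubEdge hp hpB
  · intro hM
    rcases eq_image_copyEdge_or_of_isMatchingFinset hM with ⟨B, rfl⟩ | ⟨p, hp, B, hpB, rfl⟩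
    · exact Or.inl ⟨B, rfl⟩
    · exact Or.inr ⟨p, B, ⟨hp, hpB⟩, rfl⟩

theorem insert_hubEdge_injective :
    Function.Injective fun x : (_ : Fin r × Bool) × Finset (Fin r) =>
      insert (hubEdge x.1) (x.2.image copyEdge) := by
  rintro ⟨p, B⟩ ⟨q, C⟩ h
  dsimp only at h
  obtain rfl : p = q := by
    rcases mem_insert.1 (h ▸ mem_insert_self (hubEdge p) _) with hpq | hpC
    · exact hubEdge_injective hpq
    · exact absurd hpC (hubEdge_notMem_image_copyEdge p C)
  have hBC := congrArg (erase · (hubEdge p)) h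
  simp only [erase_insert (hubEdge_notMem_image_copyEdge p _)] at hBC
  rw [image_injective copyEdge_injective hBC]

theorem disjoint_image_copyEdge_insert_hubEdge :
    Disjoint (univ.powerset.image (image copyEdge))
      (((hubNbrs r s).sigma fun p => (univ.erase p.1).powerset).image
        fun x => insert (hubEdge x.1) (x.2.image copyEdge)) := by
  simp only [disjoint_left, mem_image, not_exists, not_and]
  rintro _ ⟨B, -, rfl⟩ x - h
  exact hubEdge_notMem_image_copyEdge x.1 B (h ▸ mem_insert_self _ _)

end SGraph

open SimpleGraph SGraph

/-- The matching polynomial of `S(r,s)` is `x (x² - s - 1)(x² - 1)^(r-1)`. -/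
theorem matchingPolynomial_SGraph (r s : ℕ) (hr : 1 ≤ r) (hrs : r ≤ s) (hs : s ≤ 2 * r) :
    (SGraph r s).matchingPolynomial =
      X * (X ^ 2 - C ((s : ℝ) + 1)) * (X ^ 2 - 1) ^ (r - 1) := by
  have hcard : Fintype.card (Option (Fin r × Bool)) = 2 * r + 1 := by simp [mul_comm]
  have hhub : ∀ p ∈ hubNbrs r s, ∑ B ∈ (univ.erase p.1).powerset,
      (-1 : ℝ[X]) ^ (#B + 1) * X ^ (2 * r + 1 - 2 * (#B + 1)) = -(X * (X ^ 2 - 1) ^ (r - 1)) := by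
    intro p _
    rw [← sum_powerset_neg_one_pow_mul_X_pow (univ.erase p.1) (by simp), ← sum_neg_distrib]
    refine sum_congr rfl fun B _ => ?_
    rw [show 2 * r + 1 - 2 * (#B + 1) = 2 * (r - 1) + 1 - 2 * #B by omega]
    ring
  rw [matchingPolynomial_eq_sum _ fun _ => mem_matchings_iff, matchings,
    sum_union disjoint_image_copyEdge_insert_hubEdge,
    sum_image fun _ _ _ _ h => image_injective copyEdge_injective h,
    sum_image fun _ _ _ _ h => insert_hubEdge_injective h, sum_sigma]
  simp only [hcard, card_image_copyEdge, card_insert_hubEdge]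
  rw [sum_powerset_neg_one_pow_mul_X_pow _ (card_fin r), sum_congr rfl hhub, sum_const,
    card_hubNbrs hrs hs]
  obtain ⟨r, rfl⟩ := Nat.exists_eq_add_of_le' hr
  simp only [add_tsub_cancel_right, nsmul_eq_mul, map_add, map_natCast, map_one]
  ring
end

section
/- For all integers r ≥ 1 and k ≥ 1, the matching polynomial of the graph T(r,k) is μ(T(r,k),x) = x^{r(k−1)+1} (x² − r − k)(x² − k)^{r−1}. -/
open Polynomial

/-- The graph `T(r,k)`: `r` disjoint copies of `K_{1,k}` (the `i`-th has centre `some (i, none)`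
and leaves `some (i, some j)`) together with an extra vertex `none` adjacent to exactly the `r`
centres. -/
def TGraph (r k : ℕ) : SimpleGraph (Option (Fin r × Option (Fin k))) :=
  SimpleGraph.fromRel fun x y =>
    (∃ i, x = none ∧ y = some (i, none)) ∨
    (∃ i j, x = some (i, none) ∧ y = some (i, some j))

/-!
A matching of `T(r,k)` is the same as a choice, at each centre, of nothing, the edge to the hub, or
the edge to one of its `k` leaves, where the edge to the hub is chosen at most once. Every edge of a
matching covers two vertices, whichever kind it is, so the term `(-1)^|M| x^(n - 2|M|)` of such a
choice factors as `x` times a product over the centres of `x^(k+1)` (centre unmatched) or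
`-x^(k-1)` (centre matched). Summing these products over the choices avoiding the hub gives
`(x^(k+1) - k x^(k-1))^r`, and over the choices using the hub edge at a given centre
`-x^(k-1) (x^(k+1) - k x^(k-1))^(r-1)`.
-/

open Finset

namespace SimpleGraph

variable {V : Type*} {G : SimpleGraph V} {s : Finset (Sym2 V)}

theorem IsMatchingFinset.eq_of_mem_of_mem (hs : G.IsMatchingFinset s) {e f : Sym2 V}
    (he : e ∈ s) (hf : f ∈ s) {v : V} (hve : v ∈ e) (hvf : v ∈ f) : e = f := by
  by_contra hne
  exact hs.2 he hf hne v hve hvf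

theorem IsMatchingFinset.card_le_s7 [Fintype V] (hs : G.IsMatchingFinset s) :
    #s ≤ Fintype.card V := by
  refine card_le_card_of_injOn (t := univ) (fun e => e.out.1) (fun _ _ => mem_univ _) ?_
  intro e he f hf hef
  exact hs.eq_of_mem_of_mem he hf (Sym2.out_fst_mem e)
    (by rw [show e.out.1 = f.out.1 from hef]; exact Sym2.out_fst_mem f)

theorem matchingPolynomial_eq_sum_isMatchingFinset [Fintype V]
    [DecidablePred G.IsMatchingFinset] :
    G.matchingPolynomial =
      ∑ s with G.IsMatchingFinset s, C ((-1 : ℝ) ^ #s) * X ^ (Fintype.card V - 2 * #s) := by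
  rw [← sum_fiberwise_of_maps_to' (g := card) (t := range (Fintype.card V + 1))
    (f := fun t => C ((-1 : ℝ) ^ t) * X ^ (Fintype.card V - 2 * t))
    fun s hs => mem_range_succ_iff.2 (mem_filter.1 hs).2.card_le_s7]
  refine sum_congr rfl fun t _ => ?_
  have hcount : G.numMatchings t = #{s | G.IsMatchingFinset s ∧ #s = t} := by
    rw [numMatchings, ← Set.ncard_coe_finset]
    congr 1
    ext s
    simp [and_comm]
  rw [hcount, filter_filter, sum_const, nsmul_eq_mul, C_mul, map_natCast]
  ring

end SimpleGraph

namespace TGraph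

variable {r k : ℕ}

abbrev Vertex (r k : ℕ) := Option (Fin r × Option (Fin k))

/-- `edge i none` joins the centre `i` to the hub, `edge i (some j)` joins it to its leaf `j`. -/
def edge (i : Fin r) (a : Option (Fin k)) : Sym2 (Vertex r k) :=
  s(some (i, none), a.map fun j => (i, some j))

theorem edge_mem_edgeSet (i : Fin r) (a : Option (Fin k)) : edge i a ∈ (TGraph r k).edgeSet := by
  cases a <;> simp [edge, TGraph]

theorem mem_edgeSet_iff {e : Sym2 (Vertex r k)} :
    e ∈ (TGraph r k).edgeSet ↔ ∃ i a, e = edge i a := by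
  refine ⟨fun he => ?_, fun ⟨i, a, he⟩ => he ▸ edge_mem_edgeSet i a⟩
  induction e with
  | _ x y =>
    simp only [TGraph, SimpleGraph.mem_edgeSet, SimpleGraph.fromRel_adj] at he
    rcases he with
      ⟨-, (⟨i, rfl, rfl⟩ | ⟨i, j, rfl, rfl⟩) | (⟨i, rfl, rfl⟩ | ⟨i, j, rfl, rfl⟩)⟩
    · exact ⟨i, none, Sym2.eq_swap⟩
    · exact ⟨i, some j, rfl⟩
    · exact ⟨i, none, rfl⟩
    · exact ⟨i, some j, Sym2.eq_swap⟩

theorem edge_inj {i i' : Fin r} {a a' : Option (Fin k)} :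
    edge i a = edge i' a' ↔ i = i' ∧ a = a' := by
  refine ⟨fun h => ?_, fun ⟨hi, ha⟩ => hi ▸ ha ▸ rfl⟩
  cases a <;> cases a' <;> simp_all [edge]

theorem exists_mem_edge_and_mem_edge {i i' : Fin r} {a a' : Option (Fin k)} :
    (∃ v, v ∈ edge i a ∧ v ∈ edge i' a') ↔ i = i' ∨ a = none ∧ a' = none := by
  cases a <;> cases a' <;> aesop (add simp edge)

/-- A choice `g` leaves the centre `i` unmatched if `g i = none` and matches it by `edge i a`
if `g i = some a`. -/
abbrev Choice (r k : ℕ) := Fin r → Option (Option (Fin k))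

def matchingOf (g : Choice r k) : Finset (Sym2 (Vertex r k)) :=
  ({p | g p.1 = some p.2} : Finset (Fin r × Option (Fin k))).image fun p => edge p.1 p.2

theorem mem_matchingOf {g : Choice r k} {e : Sym2 (Vertex r k)} :
    e ∈ matchingOf g ↔ ∃ i a, g i = some a ∧ e = edge i a := by
  simp [matchingOf, eq_comm]

theorem edge_mem_matchingOf {g : Choice r k} {i : Fin r} {a : Option (Fin k)} :
    edge i a ∈ matchingOf g ↔ g i = some a := by
  simp only [mem_matchingOf, edge_inj]
  exact ⟨fun ⟨_, _, h, hi, ha⟩ => hi ▸ ha ▸ h, fun h => ⟨i, a, h, rfl, rfl⟩⟩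

theorem matchingOf_injective : Function.Injective (matchingOf (r := r) (k := k)) := by
  intro g g' h
  funext i
  cases hg : g i with
  | none =>
    cases hg' : g' i with
    | none => rfl
    | some a => rw [← edge_mem_matchingOf, ← h, edge_mem_matchingOf, hg] at hg'; cases hg'
  | some a => rw [← edge_mem_matchingOf, h, edge_mem_matchingOf] at hg; exact hg.symm

theorem card_matchingOf (g : Choice r k) : #(matchingOf g) = #{i | g i ≠ none} := by
  rw [matchingOf, card_image_of_injective _ fun p q h => Prod.ext_iff.2 (edge_inj.1 h)]
  refine card_nbij' Prod.fst (fun i => (i, (g i).getD none)) ?_ ?_ ?_ ?_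
  · intro p hp
    simp_all
  · intro i hi
    simp only [coe_filter, Set.mem_ofPred_eq, mem_univ, true_and] at hi ⊢
    obtain ⟨a, ha⟩ := Option.ne_none_iff_exists'.1 hi
    simp [ha]
  · intro p hp
    simp_all
  · intro i _
    rfl

theorem isMatchingFinset_matchingOf {g : Choice r k} (hg : {i | g i = some none}.Subsingleton) :
    (TGraph r k).IsMatchingFinset (matchingOf g) := by
  refine ⟨fun e he => ?_, fun e he f hf hne v hve hvf => ?_⟩
  · obtain ⟨i, a, -, rfl⟩ := mem_matchingOf.1 he
    exact edge_mem_edgeSet i a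
  · obtain ⟨i, a, hi, rfl⟩ := mem_matchingOf.1 (mem_coe.1 he)
    obtain ⟨i', a', hi', rfl⟩ := mem_matchingOf.1 (mem_coe.1 hf)
    rcases exists_mem_edge_and_mem_edge.1 ⟨v, hve, hvf⟩ with rfl | ⟨rfl, rfl⟩
    · exact hne (by rw [Option.some_injective _ (hi.symm.trans hi')])
    · exact hne (by rw [hg hi hi'])

theorem exists_matchingOf_eq {s : Finset (Sym2 (Vertex r k))}
    (hs : (TGraph r k).IsMatchingFinset s) :
    ∃ g : Choice r k, {i | g i = some none}.Subsingleton ∧ matchingOf g = s := by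
  classical
  have hedge : ∀ {i i' a a'}, edge i a ∈ s → edge i' a' ∈ s →
      i = i' ∨ a = none ∧ a' = none → i = i' ∧ a = a' := fun ha ha' hshare =>
    let ⟨_, hv, hv'⟩ := exists_mem_edge_and_mem_edge.2 hshare
    edge_inj.1 (hs.eq_of_mem_of_mem ha ha' hv hv')
  let g : Choice r k := fun i => if h : ∃ a, edge i a ∈ s then some h.choose else none
  have hg : ∀ i a, g i = some a ↔ edge i a ∈ s := by
    intro i a
    by_cases h : ∃ a, edge i a ∈ s
    · simp only [g, dif_pos h, Option.some.injEq]
      exact ⟨fun ha => ha ▸ h.choose_spec, fun ha => (hedge h.choose_spec ha (Or.inl rfl)).2⟩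
    · simp only [g, dif_neg h, reduceCtorEq, false_iff]
      exact fun ha => h ⟨a, ha⟩
  refine ⟨g, fun i hi i' hi' => (hedge ((hg _ _).1 hi) ((hg _ _).1 hi') (Or.inr ⟨rfl, rfl⟩)).1, ?_⟩
  ext e
  rw [mem_matchingOf]
  refine ⟨fun ⟨i, a, ha, he⟩ => he ▸ (hg i a).1 ha, fun he => ?_⟩
  obtain ⟨i, a, rfl⟩ := mem_edgeSet_iff.1 (hs.1 he)
  exact ⟨i, a, (hg i a).2 he, rfl⟩

def hubFree (k : ℕ) : Finset (Option (Option (Fin k))) := univ.erase (some none)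

def choicesWithoutHub (r k : ℕ) : Finset (Choice r k) :=
  Fintype.piFinset fun _ => hubFree k

def choicesWithHubAt (i : Fin r) : Finset (Choice r k) :=
  Fintype.piFinset (Function.update (fun _ => hubFree k) i {some none})

def admissible (r k : ℕ) : Finset (Choice r k) :=
  choicesWithoutHub r k ∪ univ.biUnion choicesWithHubAt

theorem mem_hubFree {a : Option (Option (Fin k))} : a ∈ hubFree k ↔ a ≠ some none := by
  simp [hubFree]

theorem mem_update_hubFree {i j : Fin r} {a : Option (Option (Fin k))} :
    a ∈ Function.update (fun _ => hubFree k) i {some none} j ↔ (j = i ↔ a = some none) := by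
  rcases eq_or_ne j i with rfl | hji
  · simp
  · simp [hji, mem_hubFree]

theorem mem_admissible {g : Choice r k} :
    g ∈ admissible r k ↔ {i | g i = some none}.Subsingleton := by
  simp only [admissible, choicesWithoutHub, choicesWithHubAt, mem_union, mem_biUnion, mem_univ,
    true_and, Fintype.mem_piFinset, mem_hubFree, mem_update_hubFree]
  constructor
  · rintro (h | ⟨i, h⟩) j hj j' hj'
    · exact absurd hj (h j)
    · exact ((h j).2 hj).trans ((h j').2 hj').symm
  · intro hg
    by_cases hhub : ∃ i, g i = some none
    · obtain ⟨i, hi⟩ := hhub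
      exact Or.inr ⟨i, fun j => ⟨fun hj => hj ▸ hi, fun hj => hg hj hi⟩⟩
    · exact Or.inl fun j hj => hhub ⟨j, hj⟩

theorem image_matchingOf_admissible [DecidablePred (TGraph r k).IsMatchingFinset] :
    (admissible r k).image matchingOf = univ.filter (TGraph r k).IsMatchingFinset := by
  ext s
  simp only [mem_image, mem_admissible, mem_filter, mem_univ, true_and]
  exact ⟨fun ⟨g, hg, hgs⟩ => hgs ▸ isMatchingFinset_matchingOf hg, exists_matchingOf_eq⟩

/-- A centre matched to the hub leaves its `k` leaves uncovered but covers the hub, whose factor `X`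
stands outside the product; so both kinds of matched centre get `-X ^ (k - 1)`. -/
noncomputable def starWeight (k : ℕ) (a : Option (Option (Fin k))) : ℝ[X] :=
  if a = none then X ^ (k + 1) else -X ^ (k - 1)

theorem prod_starWeight (g : Choice r k) :
    ∏ i, starWeight k (g i) =
      (X ^ (k + 1)) ^ #{i | g i = none} * (-X ^ (k - 1)) ^ #{i | g i ≠ none} := by
  simp only [starWeight, prod_ite, prod_const, ← ne_eq]

theorem X_mul_prod_starWeight (hk : 1 ≤ k) (g : Choice r k) :
    X * ∏ i, starWeight k (g i) =
      C ((-1 : ℝ) ^ #{i | g i ≠ none}) * X ^ (r * (k + 1) + 1 - 2 * #{i | g i ≠ none}) := by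
  have hsplit : #{i | g i = none} + #{i | g i ≠ none} = r := by
    simpa using card_filter_add_card_filter_not (s := univ) fun i => g i = none
  rw [prod_starWeight]
  generalize #{i | g i = none} = d, #{i | g i ≠ none} = m at *
  subst hsplit
  obtain ⟨k, rfl⟩ := Nat.exists_eq_add_of_le' hk
  rw [show (d + m) * (k + 1 + 1) + 1 = 1 + (k + 2) * d + k * m + 2 * m by ring]
  simp only [Nat.add_sub_cancel, map_pow, map_neg, map_one]
  ring

theorem sum_hubFree_starWeight (hk : 1 ≤ k) :
    ∑ a ∈ hubFree k, starWeight k a = X ^ (k - 1) * (X ^ 2 - C (k : ℝ)) := by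
  obtain ⟨k, rfl⟩ := Nat.exists_eq_add_of_le' hk
  rw [hubFree, sum_erase_eq_sub (mem_univ _), Fintype.sum_option, Fintype.sum_option]
  simp only [starWeight, reduceCtorEq, if_true, if_false, sum_const, card_univ, Fintype.card_fin,
    nsmul_eq_mul, Nat.add_sub_cancel, map_natCast]
  ring

theorem sum_admissible_prod_starWeight (hk : 1 ≤ k) :
    ∑ g ∈ admissible r k, ∏ i, starWeight k (g i) =
      (X ^ (k - 1) * (X ^ 2 - C (k : ℝ))) ^ r -
        (r : ℝ[X]) * X ^ (k - 1) * (X ^ (k - 1) * (X ^ 2 - C (k : ℝ))) ^ (r - 1) := by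
  have hdisj : Disjoint (choicesWithoutHub r k) (univ.biUnion choicesWithHubAt) := by
    simp only [choicesWithoutHub, choicesWithHubAt, disjoint_left, mem_biUnion, mem_univ,
      true_and, not_exists, Fintype.mem_piFinset, mem_hubFree, mem_update_hubFree]
    exact fun g hg i hi => hg i ((hi i).1 rfl)
  have hpairwise : ((univ : Finset (Fin r)) : Set (Fin r)).PairwiseDisjoint
      (choicesWithHubAt (k := k)) := by
    intro i _ i' _ hne
    simp only [choicesWithHubAt, Function.onFun, disjoint_left, Fintype.mem_piFinset,
      mem_update_hubFree]
    exact fun g hg hg' => hne ((hg' i).2 ((hg i).1 rfl))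
  have hhub : ∑ a ∈ {some none}, starWeight k a = -X ^ (k - 1) := by
    simp [starWeight]
  rw [admissible, sum_union hdisj, sum_biUnion hpairwise, choicesWithoutHub, ← prod_univ_sum]
  simp_rw [choicesWithHubAt, ← prod_univ_sum,
    Function.apply_update (fun _ s => ∑ a ∈ s, starWeight k a), prod_update_of_mem (mem_univ _),
    hhub, sum_hubFree_starWeight hk, prod_const]
  simp only [card_sdiff, card_univ, Fintype.card_fin, inter_univ, card_singleton, sum_const,
    nsmul_eq_mul]
  ring

end TGraph

/-- The matching polynomial of `T(r,k)` is `x^(r(k-1)+1) (x² - r - k)(x² - k)^(r-1)`. -/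
theorem matchingPolynomial_TGraph (r k : ℕ) (hr : 1 ≤ r) (hk : 1 ≤ k) :
    (TGraph r k).matchingPolynomial =
      X ^ (r * (k - 1) + 1) * (X ^ 2 - C ((r : ℝ) + (k : ℝ))) * (X ^ 2 - C (k : ℝ)) ^ (r - 1) := by
  classical
  have hcard : Fintype.card (TGraph.Vertex r k) = r * (k + 1) + 1 := by simp
  rw [SimpleGraph.matchingPolynomial_eq_sum_isMatchingFinset,
    ← TGraph.image_matchingOf_admissible, sum_image TGraph.matchingOf_injective.injOn, hcard]
  simp_rw [TGraph.card_matchingOf, ← TGraph.X_mul_prod_starWeight hk]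
  rw [← mul_sum, TGraph.sum_admissible_prod_starWeight hk]
  obtain ⟨r, rfl⟩ := Nat.exists_eq_add_of_le' hr
  obtain ⟨k, rfl⟩ := Nat.exists_eq_add_of_le' hk
  simp only [Nat.add_sub_cancel, mul_pow, ← pow_mul, map_add, map_natCast, Nat.cast_add,
    Nat.cast_one, map_one]
  ring
end

section
/- For all integers k ≥ 1, t ≥ 0 and 1 ≤ ℓ ≤ k, the matching polynomial of the graph K(k,t;ℓ) is μ(K(k,t;ℓ),x) = x^{k+t−2} (x⁴ − (k+t+ℓ)x² + (ℓ+t)(k−1) + t). -/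
open Polynomial

/-- The graph `K(k,t;ℓ)`: a star `K_{1,k}` with centre `some (Sum.inl none)` and leaves
`some (Sum.inl (some j))`, `t` further vertices `some (Sum.inr i)`, and an extra vertex `none`
adjacent to exactly the first `ℓ` leaves of the star (not to its centre) and to all `t` further
vertices. -/
def KGraph (k t ℓ : ℕ) : SimpleGraph (Option (Option (Fin k) ⊕ Fin t)) :=
  SimpleGraph.fromRel fun x y =>
    (∃ j : Fin k, x = some (Sum.inl none) ∧ y = some (Sum.inl (some j))) ∨
    (∃ j : Fin k, (j : ℕ) < ℓ ∧ x = none ∧ y = some (Sum.inl (some j))) ∨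
    (∃ i : Fin t, x = none ∧ y = some (Sum.inr i))

/-!
The centre `c` of the star and the new vertex `u` are non-adjacent and together cover every edge.
So a matching has at most two edges; the `1`-matchings are the `deg c + deg u = k + ℓ + t` edges;
and a `2`-matching is an edge `cx` together with an edge `uy`, `y ≠ x`, giving
`deg c · deg u - |N(c) ∩ N(u)| = k(ℓ + t) - ℓ` of them.
-/

open Finset

namespace Finset

theorem card_filter_ne_product {α : Type*} [DecidableEq α] (s t : Finset α) :
    #{p ∈ s ×ˢ t | p.1 ≠ p.2} = #s * #t - #(s ∩ t) := by
  have hdiag : #{p ∈ s ×ˢ t | p.1 = p.2} = #(s ∩ t) := by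
    refine card_nbij' Prod.fst (fun x => (x, x)) ?_ ?_ ?_ ?_
    · rintro ⟨x, y⟩ h
      simp only [coe_filter, mem_product, Set.mem_ofPred_eq] at h
      obtain ⟨⟨hx, hy⟩, rfl⟩ := h
      exact mem_inter.2 ⟨hx, hy⟩
    · intro x hx
      simpa using hx
    · rintro ⟨x, y⟩ h
      simp only [coe_filter, mem_product, Set.mem_ofPred_eq] at h
      obtain ⟨_, rfl⟩ := h
      rfl
    · intro x _
      rfl
  have := card_filter_add_card_filter_not (s := s ×ˢ t) (fun p => p.1 = p.2)
  rw [hdiag, card_product] at this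
  simp only [ne_eq]
  omega

end Finset

namespace SimpleGraph

variable {V : Type*} (G : SimpleGraph V)

theorem isMatchingFinset_singleton {e : Sym2 V} : G.IsMatchingFinset {e} ↔ e ∈ G.edgeSet := by
  simp [IsMatchingFinset]

theorem isMatchingFinset_pair [DecidableEq V] {e f : Sym2 V} (hef : e ≠ f) :
    G.IsMatchingFinset {e, f} ↔ e ∈ G.edgeSet ∧ f ∈ G.edgeSet ∧ ∀ v ∈ e, v ∉ f := by
  simp only [IsMatchingFinset, coe_pair, Set.insert_subset_iff, Set.singleton_subset_iff,
    Set.pairwise_pair, and_assoc]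
  exact and_congr_right fun _ => and_congr_right fun _ =>
    ⟨fun h => (h hef).1, fun h _ => ⟨h, fun v hf he => h v he hf⟩⟩

theorem numMatchings_zero : G.numMatchings 0 = 1 := by
  have : {s : Finset (Sym2 V) | #s = 0 ∧ G.IsMatchingFinset s} = {∅} := by
    ext s
    simp only [Set.mem_ofPred_eq, Set.mem_singleton_iff, card_eq_zero, and_iff_left_iff_imp]
    rintro rfl
    simp [IsMatchingFinset]
  rw [numMatchings, this, Set.ncard_singleton]

theorem numMatchings_one [Fintype G.edgeSet] : G.numMatchings 1 = #G.edgeFinset := by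
  have : {s : Finset (Sym2 V) | #s = 1 ∧ G.IsMatchingFinset s} =
      G.edgeFinset.map ⟨({·}), singleton_injective⟩ := by
    ext s
    simp only [Set.mem_ofPred_eq, card_eq_one, coe_map, Set.mem_image, mem_coe, mem_edgeFinset]
    constructor
    · rintro ⟨⟨e, rfl⟩, he⟩
      exact ⟨e, (G.isMatchingFinset_singleton).1 he, rfl⟩
    · rintro ⟨e, he, rfl⟩
      exact ⟨⟨e, rfl⟩, (G.isMatchingFinset_singleton).2 he⟩
  rw [numMatchings, this, Set.ncard_coe_finset, card_map]

theorem IsMatchingFinset.card_le_of_forall_exists_mem {s : Finset (Sym2 V)} {C : Finset V}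
    (hs : G.IsMatchingFinset s) (hC : ∀ e ∈ G.edgeSet, ∃ v ∈ C, v ∈ e) : #s ≤ #C := by
  refine card_le_card_of_forall_subsingleton (fun e v => v ∈ e)
    (fun e he => hC e (hs.1 he)) fun v _ e he f hf => ?_
  by_contra hef
  exact hs.2 he.1 hf.1 hef v he.2 hf.2

theorem numMatchings_eq_zero_of_forall_exists_mem {C : Finset V}
    (hC : ∀ e ∈ G.edgeSet, ∃ v ∈ C, v ∈ e) {j : ℕ} (hj : #C < j) : G.numMatchings j = 0 := by
  suffices {s : Finset (Sym2 V) | #s = j ∧ G.IsMatchingFinset s} = ∅ by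
    rw [numMatchings, this, Set.ncard_empty]
  ext s
  simp only [Set.mem_ofPred_eq, Set.mem_empty_iff_false, iff_false, not_and]
  rintro rfl hs
  exact (hs.card_le_of_forall_exists_mem G hC).not_gt hj

theorem notMem_edge_of_not_adj {u v w : V} (huv : u ≠ v) (huv' : ¬G.Adj u v) (hvw : G.Adj v w) :
    u ∉ s(v, w) := by
  rw [Sym2.mem_iff]
  rintro (rfl | rfl)
  exacts [huv rfl, huv' hvw.symm]

section TwoVertexCover

variable [Fintype V] [DecidableEq V] [DecidableRel G.Adj] {a b : V}

theorem card_edgeFinset_of_covers_pair (hne : a ≠ b) (hab : ¬G.Adj a b)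
    (hcover : ∀ e ∈ G.edgeSet, a ∈ e ∨ b ∈ e) : #G.edgeFinset = G.degree a + G.degree b := by
  have hunion : G.edgeFinset = G.incidenceFinset a ∪ G.incidenceFinset b := by
    ext e
    simp only [mem_union, incidenceFinset_eq_filter, mem_filter, ← and_or_left]
    exact ⟨fun he => ⟨he, hcover e (mem_edgeFinset.1 he)⟩, And.left⟩
  have hdisj : Disjoint (G.incidenceFinset a) (G.incidenceFinset b) := by
    refine Finset.disjoint_left.2 fun e hea heb => hab ?_
    simp only [mem_incidenceFinset, incidenceSet, Set.mem_ofPred_eq] at hea heb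
    rw [← mem_edgeSet, ← (Sym2.mem_and_mem_iff hne).1 ⟨hea.2, heb.2⟩]
    exact hea.1
  rw [hunion, card_union_of_disjoint hdisj, card_incidenceFinset_eq_degree,
    card_incidenceFinset_eq_degree]

theorem setOf_isMatchingFinset_card_two_eq (hne : a ≠ b) (hab : ¬G.Adj a b)
    (hcover : ∀ e ∈ G.edgeSet, a ∈ e ∨ b ∈ e) :
    {s : Finset (Sym2 V) | #s = 2 ∧ G.IsMatchingFinset s} =
      ({p ∈ G.neighborFinset a ×ˢ G.neighborFinset b | p.1 ≠ p.2}.image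
        fun p => {s(a, p.1), s(b, p.2)} : Finset (Finset (Sym2 V))) := by
  have hpair : ∀ e f, e ∈ G.edgeSet → f ∈ G.edgeSet → (∀ v ∈ e, v ∉ f) → a ∈ e →
      ∃ p : V × V, ((G.Adj a p.1 ∧ G.Adj b p.2) ∧ p.1 ≠ p.2) ∧
        ({s(a, p.1), s(b, p.2)} : Finset (Sym2 V)) = {e, f} := by
    intro e f he hf hef hae
    obtain ⟨x, rfl⟩ := Sym2.mem_iff_exists.1 hae
    obtain ⟨y, rfl⟩ := Sym2.mem_iff_exists.1 ((hcover _ hf).resolve_left (hef a hae))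
    refine ⟨(x, y), ⟨⟨he, hf⟩, fun hxy => hef x (Sym2.mem_mk_right _ _) ?_⟩, rfl⟩
    rw [show x = y from hxy]
    exact Sym2.mem_mk_right _ _
  ext s
  simp only [Set.mem_ofPred_eq, coe_image, Set.mem_image, mem_coe, mem_filter, mem_product,
    mem_neighborFinset]
  constructor
  · rintro ⟨hcard, hs⟩
    obtain ⟨e, f, hne', rfl⟩ := card_eq_two.1 hcard
    obtain ⟨he, hf, hef⟩ := (G.isMatchingFinset_pair hne').1 hs
    rcases hcover e he with hae | hbe
    · exact hpair e f he hf hef hae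
    · have haf : a ∈ f := (hcover f hf).resolve_right (hef b hbe)
      rw [pair_comm]
      exact hpair f e hf he (fun v hvf hve => hef v hve hvf) haf
  · rintro ⟨⟨x, y⟩, ⟨⟨hx, hy⟩, hxy⟩, rfl⟩
    have hay : a ∉ s(b, y) := G.notMem_edge_of_not_adj hne hab hy
    have hxy' : x ∉ s(b, y) := by
      rw [Sym2.mem_iff]
      rintro (rfl | rfl)
      exacts [hab hx, hxy rfl]
    refine ⟨card_pair fun h => hay (h ▸ Sym2.mem_mk_left _ _), (G.isMatchingFinset_pair ?_).2
      ⟨hx, hy, fun v hv => ?_⟩⟩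
    · exact fun h => hay (h ▸ Sym2.mem_mk_left _ _)
    · rcases Sym2.mem_iff.1 hv with rfl | rfl
      exacts [hay, hxy']

theorem numMatchings_two_of_covers_pair (hne : a ≠ b) (hab : ¬G.Adj a b)
    (hcover : ∀ e ∈ G.edgeSet, a ∈ e ∨ b ∈ e) :
    G.numMatchings 2 = G.degree a * G.degree b - #(G.neighborFinset a ∩ G.neighborFinset b) := by
  rw [numMatchings, G.setOf_isMatchingFinset_card_two_eq hne hab hcover, Set.ncard_coe_finset,
    card_image_of_injOn, card_filter_ne_product, card_neighborFinset_eq_degree,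
    card_neighborFinset_eq_degree]
  rintro ⟨x, y⟩ - ⟨x', y'⟩ hp' h
  simp only [coe_filter, mem_product, mem_neighborFinset, Set.mem_ofPred_eq] at hp' h
  have hax : s(a, x) ∈ ({s(a, x'), s(b, y')} : Finset (Sym2 V)) := h ▸ mem_insert_self _ _
  have hby : s(b, y) ∈ ({s(a, x'), s(b, y')} : Finset (Sym2 V)) :=
    h ▸ mem_insert_of_mem (mem_singleton_self _)
  rw [mem_insert, mem_singleton] at hax hby
  have hay' : a ∉ s(b, y') := G.notMem_edge_of_not_adj hne hab hp'.1.2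
  have hbx' : b ∉ s(a, x') := G.notMem_edge_of_not_adj hne.symm (fun h => hab h.symm) hp'.1.1
  rw [Prod.mk.injEq, ← Sym2.congr_right, ← Sym2.congr_right (a := b)]
  exact ⟨hax.resolve_right fun h => hay' (h ▸ Sym2.mem_mk_left _ _),
    hby.resolve_left fun h => hbx' (h ▸ Sym2.mem_mk_left _ _)⟩

theorem matchingPolynomial_of_covers_pair (hne : a ≠ b) (hab : ¬G.Adj a b)
    (hcover : ∀ e ∈ G.edgeSet, a ∈ e ∨ b ∈ e) :
    G.matchingPolynomial =
      X ^ Fintype.card V - C ((G.degree a + G.degree b : ℕ) : ℝ) * X ^ (Fintype.card V - 2) +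
        C ((G.degree a * G.degree b - #(G.neighborFinset a ∩ G.neighborFinset b) : ℕ) : ℝ) *
          X ^ (Fintype.card V - 4) := by
  have hcard : 2 ≤ Fintype.card V := (card_pair hne).symm.trans_le (card_le_univ _)
  have hvanish : ∀ j, 3 ≤ j → G.numMatchings j = 0 := fun j hj =>
    G.numMatchings_eq_zero_of_forall_exists_mem (C := {a, b})
      (fun e he => by simpa using hcover e he) (by rw [card_pair hne]; omega)
  rw [matchingPolynomial, ← sum_subset (range_subset_range.2 (by omega : 3 ≤ Fintype.card V + 1))
    fun j _ hj => by rw [hvanish j (by simpa using hj)]; simp]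
  simp only [sum_range_succ, range_zero, sum_empty, numMatchings_zero, G.numMatchings_one,
    G.card_edgeFinset_of_covers_pair hne hab hcover,
    G.numMatchings_two_of_covers_pair hne hab hcover]
  simp only [Nat.cast_one, map_mul, map_pow, map_neg, map_one, mul_zero, Nat.sub_zero]
  ring

end TwoVertexCover

end SimpleGraph

namespace KGraph

variable {k t ℓ : ℕ}

theorem adj_center {x : Option (Option (Fin k) ⊕ Fin t)} :
    (KGraph k t ℓ).Adj (some (.inl none)) x ↔ ∃ j, x = some (.inl (some j)) := by
  cases x with
  | none => simp [KGraph]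
  | some x => rcases x with (_ | j) | i <;> simp [KGraph]

theorem adj_apex {x : Option (Option (Fin k) ⊕ Fin t)} :
    (KGraph k t ℓ).Adj none x ↔
      (∃ j : Fin k, j < ℓ ∧ x = some (.inl (some j))) ∨ ∃ i, x = some (.inr i) := by
  cases x with
  | none => simp [KGraph]
  | some x => rcases x with (_ | j) | i <;> simp [KGraph]

theorem not_adj_center_apex : ¬(KGraph k t ℓ).Adj (some (.inl none)) none := by
  simp [adj_center]

theorem center_mem_or_apex_mem {e : Sym2 (Option (Option (Fin k) ⊕ Fin t))}
    (he : e ∈ (KGraph k t ℓ).edgeSet) : some (.inl none) ∈ e ∨ none ∈ e := by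
  induction e using Sym2.ind with
  | h x y =>
    simp only [SimpleGraph.mem_edgeSet, KGraph, SimpleGraph.fromRel_adj] at he
    aesop

theorem card_vertices : Fintype.card (Option (Option (Fin k) ⊕ Fin t)) = k + t + 2 := by
  simp only [Fintype.card_option, Fintype.card_sum, Fintype.card_fin]
  omega

section Degrees

variable [DecidableRel (KGraph k t ℓ).Adj]

theorem degree_center : (KGraph k t ℓ).degree (some (.inl none)) = k := by
  rw [← SimpleGraph.card_neighborFinset_eq_degree, SimpleGraph.neighborFinset_eq_filter,
    card_filter, Fintype.sum_option, Fintype.sum_sum_type, Fintype.sum_option]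
  simp [adj_center]

theorem degree_apex (hℓk : ℓ ≤ k) : (KGraph k t ℓ).degree none = ℓ + t := by
  rw [← SimpleGraph.card_neighborFinset_eq_degree, SimpleGraph.neighborFinset_eq_filter,
    card_filter, Fintype.sum_option, Fintype.sum_sum_type, Fintype.sum_option]
  simp [adj_apex, Fin.card_filter_val_lt, hℓk]

theorem card_neighborFinset_center_inter_apex (hℓk : ℓ ≤ k) :
    #((KGraph k t ℓ).neighborFinset (some (.inl none)) ∩ (KGraph k t ℓ).neighborFinset none) =
      ℓ := by
  rw [SimpleGraph.neighborFinset_eq_filter, SimpleGraph.neighborFinset_eq_filter, ← filter_and,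
    card_filter, Fintype.sum_option, Fintype.sum_sum_type, Fintype.sum_option]
  simp [adj_center, adj_apex, Fin.card_filter_val_lt, hℓk]

end Degrees

end KGraph

theorem matchingPolynomial_KGraph_general (k t ℓ : ℕ) (hk : 1 ≤ k) (hℓk : ℓ ≤ k) :
    X * (KGraph k t ℓ).matchingPolynomial =
      X ^ (k + t - 1) *
        (X ^ 4 - C ((k : ℝ) + (t : ℝ) + (ℓ : ℝ)) * X ^ 2 +
          C (((ℓ : ℝ) + (t : ℝ)) * ((k : ℝ) - 1) + (t : ℝ))) := by
  classical
  rw [(KGraph k t ℓ).matchingPolynomial_of_covers_pair (Option.some_ne_none _)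
    KGraph.not_adj_center_apex fun _ => KGraph.center_mem_or_apex_mem, KGraph.card_vertices,
    KGraph.degree_center, KGraph.degree_apex hℓk,
    KGraph.card_neighborFinset_center_inter_apex hℓk]
  have hℓ : ℓ ≤ k * (ℓ + t) := le_mul_of_one_le_of_le hk (Nat.le_add_right ℓ t)
  push_cast [Nat.cast_sub hℓ]
  simp only [map_add, map_sub, map_mul, map_natCast, map_one]
  obtain ⟨n, hn⟩ : ∃ n, k + t = n + 1 := ⟨k + t - 1, by omega⟩
  rw [hn, Nat.add_sub_cancel]
  rcases n with _ | n
  · obtain ⟨rfl, rfl⟩ : k = 1 ∧ t = 0 := by omega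
    norm_num
    ring
  · rw [show n + 1 + 1 - 2 = n by omega]
    ring

/-- The matching polynomial of `K(k,t;ℓ)` is `x^(k+t-2) (x⁴ - (k+t+ℓ)x² + (ℓ+t)(k-1) + t)`
(stated with both sides multiplied by `x`, so that the exponent `k+t-2` need not be a natural
number). -/
theorem matchingPolynomial_KGraph (k t ℓ : ℕ) (hk : 1 ≤ k) (hℓ : 1 ≤ ℓ) (hℓk : ℓ ≤ k) :
    X * (KGraph k t ℓ).matchingPolynomial =
      X ^ (k + t - 1) *
        (X ^ 4 - C ((k : ℝ) + (t : ℝ) + (ℓ : ℝ)) * X ^ 2 +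
          C (((ℓ : ℝ) + (t : ℝ)) * ((k : ℝ) - 1) + (t : ℝ))) :=
  matchingPolynomial_KGraph_general k t ℓ hk hℓk
end
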